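/- arXiv:2405.14183 — 2 statements merged into one kernel-verified Lean document; each statement's English description precedes it below -/
import Mathlib

section
/- For a deterministic policy π on a finite-horizon MDP, define the anytime cost recursion C^π_{H+1}(τ) = 0 and C^π_h(τ_h) = c_h(s,a) + max(0, max over s' with P_h(s'|s,a) > 0 of C^π_{h+1}(τ_h, a, s')). Then C^π_1(s_0) equals the maximum over times t ∈ [H] and over trajectories τ of positive probability under π of the partial cost Σ_{h=1}^t c_h(s_h, a_h). -/
open scoped Classical

/-- History of visited states at step `h` (current state first). -/
def histList {St : Type*} (sfun : ℕ → St) (h : ℕ) : List St :=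
  ((List.range (h + 1)).map sfun).reverse

/-- Anytime cost recursion: `C_{H+1} = 0` and
`C_h(τ) = c_h(s,a) + max(0, max_{s' : P_h(s'|s,a) > 0} C_{h+1}(s'::τ))`. -/
noncomputable def anytimeCost {St Ac : Type*} [Inhabited St]
    (P : ℕ → St → Ac → St → ℝ) (c : ℕ → St → Ac → ℝ) (π : ℕ → List St → Ac) :
    ℕ → ℕ → List St → ℝ
  | _, 0, _ => 0
  | h, n + 1, τ =>
      c h τ.headI (π h τ) +
        max 0 (sSup {x : ℝ | ∃ s' : St, 0 < P h τ.headI (π h τ) s' ∧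
          x = anytimeCost P c π (h + 1) n (s' :: τ)})

set_option linter.unusedSectionVars false

section Aux

variable {St Ac : Type*} [Inhabited St]

lemma histList_succ (g : ℕ → St) (m : ℕ) :
    histList g (m + 1) = g (m + 1) :: histList g m := by
  simp [histList, List.range_succ]

lemma histList_headI (g : ℕ → St) (m : ℕ) : (histList g m).headI = g m := by
  cases m with
  | zero => rfl
  | succ m => rw [histList_succ]; rfl

lemma histList_congr {f g : ℕ → St} {m : ℕ} (hfg : ∀ k ≤ m, f k = g k) :
    histList f m = histList g m := by
  unfold histList
  congr 1
  apply List.map_congr_left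
  intro k hk
  exact hfg k (by simpa [Nat.lt_succ_iff] using hk)

variable [Fintype St]

lemma exists_pos (P : ℕ → St → Ac → St → ℝ)
    (hP : ∀ h s a, (∀ s', 0 ≤ P h s a s') ∧ (∑ s', P h s a s') = 1)
    (h : ℕ) (s : St) (a : Ac) : ∃ s', 0 < P h s a s' := by
  by_contra hc
  push_neg at hc
  have h0 : (∑ s', P h s a s') = 0 :=
    Finset.sum_eq_zero fun s' _ => le_antisymm (hc s') ((hP h s a).1 s')
  rw [(hP h s a).2] at h0
  exact one_ne_zero h0

end Aux

section Ext

variable {St Ac : Type*} [Inhabited St]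
variable (P : ℕ → St → Ac → St → ℝ) (π : ℕ → List St → Ac)
variable (hpos : ∀ h s a, ∃ s', 0 < P h s a s')

/-- Iterated extension of a history by positive-probability transitions. -/
noncomputable def extAux (g : ℕ → St) (m : ℕ) : ℕ → ℕ → St
  | 0 => g
  | j + 1 =>
      Function.update (extAux g m j) (m + j + 1)
        (hpos (m + j) (extAux g m j (m + j))
          (π (m + j) (histList (extAux g m j) (m + j)))).choose

/-- The fully extended trajectory. -/
noncomputable def finalExt (g : ℕ → St) (m : ℕ) : ℕ → St :=
  fun k => extAux P π hpos g m (k - m) k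

lemma extAux_stable (g : ℕ → St) (m : ℕ) (d : ℕ) :
    ∀ j k, k ≤ m + j → extAux P π hpos g m (j + d) k = extAux P π hpos g m j k := by
  induction d with
  | zero => intro j k _; rfl
  | succ d IH =>
    intro j k hk
    have : j + (d + 1) = (j + d) + 1 := by omega
    rw [this]
    show Function.update (extAux P π hpos g m (j + d)) (m + (j + d) + 1) _ k = _
    rw [Function.update_of_ne (by omega), IH j k hk]

lemma finalExt_eq (g : ℕ → St) (m : ℕ) (j k : ℕ) (hk : k ≤ m + j) :
    finalExt P π hpos g m k = extAux P π hpos g m j k := by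
  have h1 : k - m ≤ j := by omega
  have h2 : k ≤ m + (k - m) := by omega
  have h3 : j = (k - m) + (j - (k - m)) := by omega
  rw [finalExt, h3, extAux_stable P π hpos g m _ _ _ h2]

lemma finalExt_agree (g : ℕ → St) (m : ℕ) (k : ℕ) (hk : k ≤ m) :
    finalExt P π hpos g m k = g k :=
  finalExt_eq P π hpos g m 0 k (by omega)

lemma finalExt_pos (g : ℕ → St) (m : ℕ) (h : ℕ) (hm : m ≤ h) :
    0 < P h (finalExt P π hpos g m h)
      (π h (histList (finalExt P π hpos g m) h)) (finalExt P π hpos g m (h + 1)) := by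
  obtain ⟨j, rfl⟩ : ∃ j, h = m + j := ⟨h - m, by omega⟩
  have e1 : finalExt P π hpos g m (m + j + 1) = extAux P π hpos g m (j + 1) (m + j + 1) :=
    finalExt_eq P π hpos g m (j + 1) _ (by omega)
  have e2 : extAux P π hpos g m (j + 1) (m + j + 1) =
      (hpos (m + j) (extAux P π hpos g m j (m + j))
        (π (m + j) (histList (extAux P π hpos g m j) (m + j)))).choose := by
    show Function.update _ (m + j + 1) _ (m + j + 1) = _
    rw [Function.update_self]
  have e3 : finalExt P π hpos g m (m + j) = extAux P π hpos g m j (m + j) :=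
    finalExt_eq P π hpos g m j _ le_rfl
  have e4 : histList (finalExt P π hpos g m) (m + j) = histList (extAux P π hpos g m j) (m + j) :=
    histList_congr (fun k hk => finalExt_eq P π hpos g m j k (by omega))
  rw [e1, e2, e3, e4]
  exact (hpos (m + j) (extAux P π hpos g m j (m + j))
    (π (m + j) (histList (extAux P π hpos g m j) (m + j)))).choose_spec

end Ext

/-- The set of achievable partial costs starting at step `m` with history `g`. -/
def costSet {St Ac : Type*} (P : ℕ → St → Ac → St → ℝ) (c : ℕ → St → Ac → ℝ)
    (π : ℕ → List St → Ac) (n m : ℕ) (g : ℕ → St) : Set ℝ :=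
  {x | ∃ t, 1 ≤ t ∧ t ≤ n ∧ ∃ sfun : ℕ → St, (∀ k ≤ m, sfun k = g k) ∧
    (∀ h, m ≤ h → h < m + n → 0 < P h (sfun h) (π h (histList sfun h)) (sfun (h + 1))) ∧
    x = ∑ h ∈ Finset.range t, c (m + h) (sfun (m + h)) (π (m + h) (histList sfun (m + h)))}

section Main

variable {St Ac : Type*} [Fintype St] [Inhabited St] [Nonempty Ac]
variable (P : ℕ → St → Ac → St → ℝ) (c : ℕ → St → Ac → ℝ) (π : ℕ → List St → Ac)

lemma tset_finite (m k : ℕ) (g : ℕ → St) :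
    {x : ℝ | ∃ s' : St, 0 < P m (g m) (π m (histList g m)) s' ∧
      x = anytimeCost P c π (m + 1) k (s' :: histList g m)}.Finite := by
  apply (Set.finite_range (fun s' : St => anytimeCost P c π (m + 1) k (s' :: histList g m))).subset
  rintro x ⟨s', _, rfl⟩
  exact ⟨s', rfl⟩

lemma cost_ub (n : ℕ) : ∀ m (g : ℕ → St), ∀ x ∈ costSet P c π n m g,
    x ≤ anytimeCost P c π m n (histList g m) := by
  induction n with
  | zero =>
    rintro m g x ⟨t, ht1, ht0, -⟩
    omega
  | succ k IH =>
    rintro m g x ⟨t, ht1, htk, sfun, hag, hpos, rfl⟩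
    have hhist : histList sfun m = histList g m := histList_congr hag
    have hsm : sfun m = g m := hag m le_rfl
    simp only [anytimeCost]
    rw [histList_headI]
    set a := π m (histList g m) with ha
    set T : Set ℝ := {x : ℝ | ∃ s' : St, 0 < P m (g m) a s' ∧
      x = anytimeCost P c π (m + 1) k (s' :: histList g m)} with hT
    have hf0 : c (m + 0) (sfun (m + 0)) (π (m + 0) (histList sfun (m + 0))) = c m (g m) a := by
      rw [Nat.add_zero, hsm, hhist]
    obtain ⟨t', rfl⟩ : ∃ t', t = t' + 1 := ⟨t - 1, by omega⟩
    rw [Finset.sum_range_succ', hf0]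
    rcases Nat.eq_zero_or_pos t' with rfl | ht'
    · simp only [Finset.range_zero, Finset.sum_empty, zero_add]
      have := le_max_left (0 : ℝ) (sSup T)
      linarith
    · have htail : (∑ h ∈ Finset.range t',
          c (m + (h + 1)) (sfun (m + (h + 1))) (π (m + (h + 1)) (histList sfun (m + (h + 1)))))
          ∈ costSet P c π k (m + 1) sfun := by
        refine ⟨t', ht', by omega, sfun, fun _ _ => rfl, fun h h1 h2 => hpos h (by omega) (by omega), ?_⟩
        apply Finset.sum_congr rfl
        intro h _
        rw [show m + (h + 1) = m + 1 + h by omega]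
      have h1 := IH (m + 1) sfun _ htail
      have h2 : histList sfun (m + 1) = sfun (m + 1) :: histList g m := by
        rw [histList_succ, hhist]
      rw [h2] at h1
      have hmem : anytimeCost P c π (m + 1) k (sfun (m + 1) :: histList g m) ∈ T := by
        refine ⟨sfun (m + 1), ?_, rfl⟩
        have := hpos m le_rfl (by omega)
        rwa [hsm, hhist] at this
      have h3 : anytimeCost P c π (m + 1) k (sfun (m + 1) :: histList g m) ≤ sSup T :=
        le_csSup (tset_finite P c π m k g).bddAbove hmem
      have h4 : sSup T ≤ max 0 (sSup T) := le_max_right _ _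
      linarith

lemma cost_mem (hpos : ∀ h s a, ∃ s', 0 < P h s a s') (n : ℕ) :
    ∀ m (g : ℕ → St), 1 ≤ n →
      anytimeCost P c π m n (histList g m) ∈ costSet P c π n m g := by
  induction n with
  | zero => intro m g h; omega
  | succ k IH =>
    intro m g _
    simp only [anytimeCost]
    rw [histList_headI]
    set a := π m (histList g m) with ha
    set T : Set ℝ := {x : ℝ | ∃ s' : St, 0 < P m (g m) a s' ∧
      x = anytimeCost P c π (m + 1) k (s' :: histList g m)} with hT
    have hTne : T.Nonempty := by
      obtain ⟨s', hs'⟩ := hpos m (g m) a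
      exact ⟨_, s', hs', rfl⟩
    have hTfin : T.Finite := tset_finite P c π m k g
    rcases le_or_gt (sSup T) 0 with hv | hv
    · rw [max_eq_left hv, add_zero]
      refine ⟨1, le_rfl, by omega, finalExt P π hpos g m,
        fun j hj => finalExt_agree P π hpos g m j hj,
        fun h h1 _ => finalExt_pos P π hpos g m h h1, ?_⟩
      rw [Finset.sum_range_one, Nat.add_zero, finalExt_agree P π hpos g m m le_rfl,
        histList_congr (fun j hj => finalExt_agree P π hpos g m j hj)]
    · rw [max_eq_right hv.le]
      obtain ⟨s', hs', hveq⟩ := hTne.csSup_mem hTfin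
      have hk1 : 1 ≤ k := by
        rcases Nat.eq_zero_or_pos k with rfl | h
        · rw [hveq] at hv; simp [anytimeCost] at hv
        · exact h
      set g' : ℕ → St := fun j => if j ≤ m then g j else s' with hg'
      have hg'm : ∀ j ≤ m, g' j = g j := fun j hj => if_pos hj
      have h1 : histList g' m = histList g m := histList_congr hg'm
      have h2 : histList g' (m + 1) = s' :: histList g m := by
        rw [histList_succ, h1]
        congr 1
        exact if_neg (by omega)
      have hmem := IH (m + 1) g' hk1
      rw [h2] at hmem
      obtain ⟨t', ht'1, ht'k, sfun, hag, hpos2, hsum⟩ := hmem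
      have hag' : ∀ j ≤ m, sfun j = g j := fun j hj => (hag j (by omega)).trans (hg'm j hj)
      have hhist : histList sfun m = histList g m := histList_congr hag'
      refine ⟨t' + 1, by omega, by omega, sfun, hag', ?_, ?_⟩
      · intro h h1 h2
        rcases Nat.lt_or_ge m h with hmh | hmh
        · exact hpos2 h (by omega) (by omega)
        · have hhm : h = m := by omega
          subst hhm
          have e1 : sfun (h + 1) = s' := (hag (h + 1) le_rfl).trans (if_neg (by omega))
          rw [hag' h le_rfl, hhist, e1]
          exact hs'
      · rw [Finset.sum_range_succ', Nat.add_zero, hag' m le_rfl, hhist, hveq, ← ha]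
        have : (∑ h ∈ Finset.range t',
            c (m + (h + 1)) (sfun (m + (h + 1))) (π (m + (h + 1)) (histList sfun (m + (h + 1)))))
            = ∑ h ∈ Finset.range t',
            c (m + 1 + h) (sfun (m + 1 + h)) (π (m + 1 + h) (histList sfun (m + 1 + h))) := by
          apply Finset.sum_congr rfl
          intro h _
          rw [show m + (h + 1) = m + 1 + h by omega]
        rw [this, ← hsum]
        ring

end Main

/-- The anytime cost recursion computes the maximum, over times `t ∈ [H]` and
positive-probability trajectories of the deterministic policy `π`, of the
partial cost up to time `t`. -/
theorem anytime_cost_eq_max_partial_cost {St Ac : Type*}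
    [Fintype St] [Inhabited St] [Fintype Ac] [Nonempty Ac]
    (H : ℕ) (P : ℕ → St → Ac → St → ℝ) (c : ℕ → St → Ac → ℝ)
    (π : ℕ → List St → Ac)
    (hP : ∀ h s a, (∀ s', 0 ≤ P h s a s') ∧ (∑ s', P h s a s') = 1)
    (s0 : St) :
    anytimeCost P c π 0 H [s0] =
      sSup {x : ℝ | ∃ t : ℕ, 1 ≤ t ∧ t ≤ H ∧ ∃ sfun : ℕ → St, sfun 0 = s0 ∧
        (∀ h < H, 0 < P h (sfun h) (π h (histList sfun h)) (sfun (h + 1))) ∧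
        x = ∑ h ∈ Finset.range t, c h (sfun h) (π h (histList sfun h))} := by
  have hpos : ∀ h s a, ∃ s', 0 < P h s a s' := fun h s a => exists_pos P hP h s a
  set g : ℕ → St := fun _ => s0 with hg
  have hset : {x : ℝ | ∃ t : ℕ, 1 ≤ t ∧ t ≤ H ∧ ∃ sfun : ℕ → St, sfun 0 = s0 ∧
      (∀ h < H, 0 < P h (sfun h) (π h (histList sfun h)) (sfun (h + 1))) ∧
      x = ∑ h ∈ Finset.range t, c h (sfun h) (π h (histList sfun h))}
      = costSet P c π H 0 g := by
    ext x
    simp only [costSet, Set.mem_setOf_eq, zero_add, Nat.le_zero]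
    constructor
    · rintro ⟨t, h1, h2, sfun, h3, h4, rfl⟩
      exact ⟨t, h1, h2, sfun, fun k hk => by subst hk; exact h3,
        fun h _ hH => h4 h hH, rfl⟩
    · rintro ⟨t, h1, h2, sfun, h3, h4, rfl⟩
      exact ⟨t, h1, h2, sfun, h3 0 rfl, fun h hH => h4 h (Nat.zero_le _) hH, rfl⟩
  rw [hset, show [s0] = histList g 0 from rfl]
  rcases Nat.eq_zero_or_pos H with rfl | hH
  · have hempty : costSet P c π 0 0 g = (∅ : Set ℝ) := by
      ext x
      simp only [costSet, Set.mem_setOf_eq, Set.mem_empty_iff_false, iff_false]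
      rintro ⟨t, h1, h2, -⟩
      omega
    rw [hempty, Real.sSup_empty]
    simp [anytimeCost]
  · have hm := cost_mem P c π hpos H 0 g hH
    have hub := cost_ub P c π H 0 g
    exact le_antisymm (le_csSup ⟨_, fun x hx => hub x hx⟩ hm) (csSup_le ⟨_, hm⟩ hub)
end

section
/- Approximate action-space recursion: under the same setup, with a rounding function round : ℝ → ℝ and threshold κ ∈ ℝ, define ĝ_v(S+1, u) = 0 if u ≥ v else ∞ and ĝ_v(t, u) = min over v_t ∈ 𝒱 of α(β(a_t, c_t(v_t)), ĝ_v(t+1, round(u + a_t v_t))). Then ĝ_v(t, u) equals the minimum over (v_t,…,v_S) ∈ 𝒱^(S−t+1) satisfying σ̂(t, u) ≥ v of the same fold, where σ̂(t, u) is the rounded partial sum defined by σ̂(S+1, u) = u and σ̂(t, u) = σ̂(t+1, round(u + a_t v_t)). -/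
/-- The fold `α(β(a_t, c_t(v_t)), α(β(a_{t+1}, c_{t+1}(v_{t+1})), …, 0))` over
indices `t, …, t+n-1`. -/
noncomputable def foldCost (α : EReal → EReal → EReal) (β : ℝ → EReal → EReal)
    (a : ℕ → ℝ) (c : ℕ → ℝ → EReal) : ℕ → ℕ → (ℕ → ℝ) → EReal
  | _, 0, _ => 0
  | t, n + 1, w => α (β (a t) (c t (w t))) (foldCost α β a c (t + 1) n w)

/-- Rounded partial sums: `σ̂(S+1, u) = u`, `σ̂(t, u) = σ̂(t+1, round(u + a_t w_t))`. -/
def sigmaHat (rnd : ℝ → ℝ) (a w : ℕ → ℝ) : ℕ → ℕ → ℝ → ℝ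
  | _, 0, u => u
  | t, n + 1, u => sigmaHat rnd a w (t + 1) n (rnd (u + a t * w t))

/-- Approximate action-space dynamic program: `ĝ_v(S+1, u) = 0` if `u ≥ v` else `∞`,
and `ĝ_v(t, u) = min_{v_t ∈ 𝒱} α(β(a_t, c_t(v_t)), ĝ_v(t+1, round(u + a_t v_t)))`. -/
noncomputable def gHat (rnd : ℝ → ℝ) (𝒱 : Finset ℝ) (α : EReal → EReal → EReal)
    (β : ℝ → EReal → EReal) (a : ℕ → ℝ) (c : ℕ → ℝ → EReal) (v : ℝ) :
    ℕ → ℕ → ℝ → EReal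
  | _, 0, u => if v ≤ u then 0 else ⊤
  | t, n + 1, u =>
      ⨅ vt ∈ 𝒱, α (β (a t) (c t vt))
        (gHat rnd 𝒱 α β a c v (t + 1) n (rnd (u + a t * vt)))

/-! By induction on the horizon `n`. Every feasible demand vector bounds `ĝ` from above,
by monotonicity of `α` in its second argument. Conversely, if `ĝ` is finite, a minimizing first
demand exists because `𝒱` is finite, and `α x ⊤ = ⊤` forces the tail value to be finite too; prepending
that demand to a feasible tail vector attaining the tail value gives a feasible vector attaining `ĝ`. -/

open Finset Function

theorem forall_mem_Ico_add_succ {P : ℕ → Prop} {t n : ℕ} :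
    (∀ i ∈ Ico t (t + (n + 1)), P i) ↔ P t ∧ ∀ i ∈ Ico (t + 1) (t + 1 + n), P i := by
  simp only [mem_Ico]
  refine ⟨fun h => ⟨h t (by omega), fun i hi => h i (by omega)⟩, fun ⟨ht, h⟩ i hi => ?_⟩
  rcases eq_or_lt_of_le hi.1 with rfl | hlt
  exacts [ht, h i (by omega)]

theorem sigmaHat_update_of_lt (rnd : ℝ → ℝ) (a w : ℕ → ℝ) {i t : ℕ} (hi : i < t) (x : ℝ)
    (n : ℕ) (u : ℝ) : sigmaHat rnd a (update w i x) t n u = sigmaHat rnd a w t n u := by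
  induction n generalizing t u with
  | zero => rfl
  | succ n ih => simp only [sigmaHat, update_of_ne hi.ne', ih (hi.trans t.lt_succ_self)]

theorem foldCost_update_of_lt (α : EReal → EReal → EReal) (β : ℝ → EReal → EReal)
    (a : ℕ → ℝ) (c : ℕ → ℝ → EReal) (w : ℕ → ℝ) {i t : ℕ} (hi : i < t) (x : ℝ) (n : ℕ) :
    foldCost α β a c t n (update w i x) = foldCost α β a c t n w := by
  induction n generalizing t with
  | zero => rfl
  | succ n ih => simp only [foldCost, update_of_ne hi.ne', ih (hi.trans t.lt_succ_self)]

section gHat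

variable (rnd : ℝ → ℝ) (𝒱 : Finset ℝ) {α : EReal → EReal → EReal} (β : ℝ → EReal → EReal)
  (a : ℕ → ℝ) (c : ℕ → ℝ → EReal) (v : ℝ)

theorem gHat_le_foldCost (hα : ∀ x, Monotone (α x)) {w : ℕ → ℝ} {t n : ℕ} {u : ℝ}
    (hw : ∀ i ∈ Ico t (t + n), w i ∈ 𝒱) (hv : v ≤ sigmaHat rnd a w t n u) :
    gHat rnd 𝒱 α β a c v t n u ≤ foldCost α β a c t n w := by
  induction n generalizing t u with
  | zero => simp [gHat, foldCost, show v ≤ u from hv]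
  | succ n ih =>
    obtain ⟨hwt, hw⟩ := forall_mem_Ico_add_succ.1 hw
    calc gHat rnd 𝒱 α β a c v t (n + 1) u
        ≤ α (β (a t) (c t (w t))) (gHat rnd 𝒱 α β a c v (t + 1) n (rnd (u + a t * w t))) := by
          rw [gHat]; exact iInf₂_le (w t) hwt
      _ ≤ foldCost α β a c t (n + 1) w := hα _ (ih hw hv)

theorem exists_mem_gHat_succ_eq (h𝒱 : 𝒱.Nonempty) (t n : ℕ) (u : ℝ) :
    ∃ vt ∈ 𝒱, gHat rnd 𝒱 α β a c v t (n + 1) u =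
      α (β (a t) (c t vt)) (gHat rnd 𝒱 α β a c v (t + 1) n (rnd (u + a t * vt))) := by
  obtain ⟨vt, hvt, hmin⟩ := 𝒱.exists_min_image
    (fun vt => α (β (a t) (c t vt)) (gHat rnd 𝒱 α β a c v (t + 1) n (rnd (u + a t * vt)))) h𝒱
  refine ⟨vt, hvt, ?_⟩
  rw [gHat]
  exact le_antisymm (iInf₂_le vt hvt) (le_iInf₂ hmin)

theorem exists_foldCost_le_gHat (hα : ∀ x, Monotone (α x)) (hαTop : ∀ x, α x ⊤ = ⊤)
    {t n : ℕ} {u : ℝ} (hfin : gHat rnd 𝒱 α β a c v t n u ≠ ⊤) :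
    ∃ w : ℕ → ℝ, (∀ i ∈ Ico t (t + n), w i ∈ 𝒱) ∧ v ≤ sigmaHat rnd a w t n u ∧
      foldCost α β a c t n w ≤ gHat rnd 𝒱 α β a c v t n u := by
  induction n generalizing t u with
  | zero =>
    have hv : v ≤ u := by by_contra hv; simp [gHat, hv] at hfin
    exact ⟨0, by simp, hv, by simp [foldCost, gHat, hv]⟩
  | succ n ih =>
    have h𝒱 : 𝒱.Nonempty := by
      rw [nonempty_iff_ne_empty]; rintro rfl; simp [gHat] at hfin
    obtain ⟨vt, hvt, hmin⟩ := exists_mem_gHat_succ_eq rnd 𝒱 β a c v h𝒱 t n u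
    have hfin' : gHat rnd 𝒱 α β a c v (t + 1) n (rnd (u + a t * vt)) ≠ ⊤ := by
      intro htop; rw [hmin, htop, hαTop] at hfin; exact hfin rfl
    obtain ⟨w, hw, hv, hle⟩ := ih hfin'
    refine ⟨update w t vt, forall_mem_Ico_add_succ.2 ⟨by simpa using hvt, fun i hi => ?_⟩,
      ?_, ?_⟩
    · rw [update_of_ne (by simp at hi; omega)]; exact hw i hi
    · simpa only [sigmaHat, update_self, sigmaHat_update_of_lt _ _ _ t.lt_succ_self] using hv
    · simpa only [hmin, foldCost, update_self, foldCost_update_of_lt _ _ _ _ _ t.lt_succ_self]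
        using hα _ hle

end gHat

theorem gHat_eq_min_general (rnd : ℝ → ℝ) (𝒱 : Finset ℝ)
    (α : EReal → EReal → EReal) (β : ℝ → EReal → EReal)
    (hα₁ : ∀ x, Monotone (α x))
    (hαTop : ∀ x, α x ⊤ = ⊤)
    (a : ℕ → ℝ) (c : ℕ → ℝ → EReal) (v : ℝ)
    (t n : ℕ) (u : ℝ) :
    gHat rnd 𝒱 α β a c v t n u =
      sInf {x : EReal | ∃ w : ℕ → ℝ,
        (∀ i ∈ Finset.Ico t (t + n), w i ∈ 𝒱) ∧
        v ≤ sigmaHat rnd a w t n u ∧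
        x = foldCost α β a c t n w} := by
  refine le_antisymm (le_sInf ?_) ?_
  · rintro x ⟨w, hw, hv, rfl⟩
    exact gHat_le_foldCost rnd 𝒱 β a c v hα₁ hw hv
  · by_cases hfin : gHat rnd 𝒱 α β a c v t n u = ⊤
    · exact hfin ▸ le_top
    · obtain ⟨w, hw, hv, hle⟩ := exists_foldCost_le_gHat rnd 𝒱 β a c v hα₁ hαTop hfin
      exact le_trans (sInf_le ⟨w, hw, hv, rfl⟩) hle

/-- The approximate recursion computes the constrained minimum of the fold over
all demand vectors in `𝒱` whose *rounded* partial sum meets the value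
constraint (minimum over an empty feasible set being `∞ = ⊤`). -/
theorem gHat_eq_min (rnd : ℝ → ℝ) (𝒱 : Finset ℝ) (h𝒱 : 𝒱.Nonempty)
    (α : EReal → EReal → EReal) (β : ℝ → EReal → EReal)
    (hα₁ : ∀ x, Monotone (α x)) (hα₂ : ∀ y, Monotone fun x => α x y)
    (hαTop : ∀ x, α x ⊤ = ⊤)
    (a : ℕ → ℝ) (ha : ∀ t, 0 ≤ a t) (c : ℕ → ℝ → EReal) (v : ℝ)
    (t n : ℕ) (u : ℝ) :
    gHat rnd 𝒱 α β a c v t n u =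
      sInf {x : EReal | ∃ w : ℕ → ℝ,
        (∀ i ∈ Finset.Ico t (t + n), w i ∈ 𝒱) ∧
        v ≤ sigmaHat rnd a w t n u ∧
        x = foldCost α β a c t n w} :=
  gHat_eq_min_general rnd 𝒱 α β hα₁ hαTop a c v t n u
end
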